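/- arXiv:1305.3179 — 4 statements merged into one kernel-verified Lean document; each statement's English description precedes it below -/
import Mathlib

section
/- Let R be a commutative ring of characteristic p^e (e ≥ 1), G a group, and g ∈ G an element of finite p-power order. Then in the group ring RG, for any l ≥ e and any s with 0 ≤ s ≤ l − e + 1, one has (1 − g)^(p^l) = (1 − g^(p^s))^(p^(l−s)). -/
/-!
Modulo `p` the Frobenius gives `(x - y)^p ≡ x^p - y^p`, and raising a congruence mod `p` to the
power `p^m` upgrades it to a congruence mod `p^(m+1)`. Once `m + 1 ≥ e` this modulus vanishes, so
`(x - y)^(p^(m+1)) = (x^p - y^p)^(p^m)`; iterating moves `s` factors of `p` from the exponent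
into `x` and `y`. The group ring is not commutative, so the identity is proved for `1` and `X` in
`R[X]` and transported along `aeval (of R G g)`.
-/

open MonoidAlgebra Polynomial

section

variable {S : Type*} [CommRing S] {p : ℕ}

theorem prime_dvd_sub_pow_sub_sub_pow (hp : p.Prime) (x y : S) :
    (p : S) ∣ (x - y) ^ p - (x ^ p - y ^ p) := by
  obtain ⟨r, hr⟩ := exists_add_pow_prime_eq hp x (-y)
  rw [sub_eq_add_neg x y, hr]
  rcases hp.eq_two_or_odd' with rfl | hodd
  · exact ⟨y ^ 2 - x * y * r, by push_cast; ring⟩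
  · rw [hodd.neg_pow]
    exact ⟨-(x * y * r), by ring⟩

theorem sub_pow_prime_pow_succ_eq {e : ℕ} [CharP S (p ^ e)] (hp : p.Prime) {m : ℕ}
    (hm : e ≤ m + 1) (x y : S) :
    (x - y) ^ p ^ (m + 1) = (x ^ p - y ^ p) ^ p ^ m := by
  have hdvd := dvd_sub_pow_of_dvd_sub (prime_dvd_sub_pow_sub_sub_pow hp x y) m
  have hzero : (p : S) ^ (m + 1) = 0 :=
    pow_eq_zero_of_le hm (by exact_mod_cast CharP.cast_eq_zero S (p ^ e))
  rwa [hzero, zero_dvd_iff, sub_eq_zero, ← pow_mul, ← pow_succ'] at hdvd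

theorem sub_pow_prime_pow_add_eq {e : ℕ} [CharP S (p ^ e)] (hp : p.Prime) {n : ℕ}
    (hn : e ≤ n + 1) (s : ℕ) (x y : S) :
    (x - y) ^ p ^ (n + s) = (x ^ p ^ s - y ^ p ^ s) ^ p ^ n := by
  induction s generalizing n with
  | zero => simp
  | succ s ih =>
    rw [← add_assoc, add_right_comm, ih (by omega), sub_pow_prime_pow_succ_eq hp hn,
      ← pow_mul, ← pow_mul, ← pow_succ]

end

theorem stmt_1_general (p e : ℕ) (hp : p.Prime) (he : 1 ≤ e)
    (R : Type*) [CommRing R] [CharP R (p ^ e)]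
    (G : Type*) [Group G] (g : G)
    (l s : ℕ) (hl : e ≤ l) (hs : s ≤ l - e + 1) :
    (1 - MonoidAlgebra.of R G g) ^ (p ^ l) =
      (1 - MonoidAlgebra.of R G (g ^ (p ^ s))) ^ (p ^ (l - s)) := by
  obtain ⟨n, rfl⟩ : ∃ n, l = n + s := ⟨l - s, by omega⟩
  have hX := sub_pow_prime_pow_add_eq (S := R[X]) hp (n := n) (by omega) s 1 X
  simpa using congrArg (aeval (of R G g)) hX

/-- In a group ring `RG` over a commutative ring of characteristic `p^e`, for an
element `g` of `p`-power order, `(1 - g)^(p^l) = (1 - g^(p^s))^(p^(l-s))` for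
`l ≥ e` and `0 ≤ s ≤ l - e + 1`. -/
theorem stmt_1 (p e : ℕ) (hp : p.Prime) (he : 1 ≤ e)
    (R : Type*) [CommRing R] [CharP R (p ^ e)]
    (G : Type*) [Group G] (g : G) (hg : ∃ m : ℕ, g ^ (p ^ m) = 1)
    (l s : ℕ) (hl : e ≤ l) (hs : s ≤ l - e + 1) :
    (1 - MonoidAlgebra.of R G g) ^ (p ^ l) =
      (1 - MonoidAlgebra.of R G (g ^ (p ^ s))) ^ (p ^ (l - s)) :=
  stmt_1_general p e hp he R G g l s hl hs
end

section
/- Let G be a finite abelian p-group and e ≥ 2. The ring homomorphism Z_{p^e} → Z_{p^{e−1}} induces a surjective group homomorphism f̄ : V(Z_{p^e}G) → V(Z_{p^{e−1}}G) between the groups of normalized units, whose kernel is 1 + p^{e−1}ω(Z_{p^e}G), an elementary abelian p-group of order p^(|G|−1). -/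
/-- The augmentation map of a group ring. -/
noncomputable def aug (R G : Type*) [CommRing R] [CommGroup G] :
    MonoidAlgebra R G →ₐ[R] R := MonoidAlgebra.lift R R G 1

/-- The augmentation ideal of a group ring. -/
noncomputable def augIdeal (R G : Type*) [CommRing R] [CommGroup G] :
    Ideal (MonoidAlgebra R G) := RingHom.ker (aug R G).toRingHom

/-- The group of normalized units of a group ring. -/
noncomputable def Vgrp (R G : Type*) [CommRing R] [CommGroup G] :
    Subgroup (MonoidAlgebra R G)ˣ :=
  MonoidHom.ker (Units.map ((aug R G).toRingHom : MonoidAlgebra R G →* R))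

/-- Reduction of coefficients `Z_{p^e} → Z_{p^{e-1}}`, extended to group rings. -/
noncomputable def fbar (p e : ℕ) (G : Type*) [CommGroup G] :
    MonoidAlgebra (ZMod (p ^ e)) G →+* MonoidAlgebra (ZMod (p ^ (e - 1))) G :=
  MonoidAlgebra.liftNCRingHom
    (MonoidAlgebra.singleOneRingHom.comp
      (ZMod.castHom (pow_dvd_pow p (Nat.sub_le e 1)) (ZMod (p ^ (e - 1)))))
    (MonoidAlgebra.of _ G) (fun _ _ => Commute.all _ _)

/-!
The reduction `f : Z_{p^e} → Z_{p^{e-1}}` has kernel generated by `c = p^{e-1}`, with `c^2 = 0`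
and `p c = 0` because `e ≥ 2`. Hence the induced map of group rings has the square-zero kernel
`c · RG`. Over a square-zero kernel every lift of a unit is a unit, so a lift of a normalized
unit, corrected by a scalar in the kernel, is a normalized unit; `u ↦ u - 1` identifies the
units mapping to `1` with the kernel ideal, and `(1 + x)^p = 1 + p x = 1` there. For the count,
the kernel ideal is `(ker f)^G` of order `p^|G|`, and the augmentation maps it onto `ker f`, of
order `p`, with kernel `ω(RG) ∩ c · RG`.
-/

section SquareZero

variable {A B : Type*} [CommRing A] [CommRing B]

lemma Ideal.mul_eq_zero_of_sq_eq_bot {I : Ideal A} (hI : I ^ 2 = ⊥) {x y : A} (hx : x ∈ I)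
    (hy : y ∈ I) : x * y = 0 := by
  have : x * y ∈ I ^ 2 := pow_two I ▸ Ideal.mul_mem_mul hx hy
  rwa [hI, Ideal.mem_bot] at this

lemma one_add_pow_of_mul_self_eq_zero {x : A} (hx : x * x = 0) (n : ℕ) :
    (1 + x) ^ n = 1 + n * x := by
  induction n with
  | zero => simp
  | succ n ih => rw [pow_succ, ih]; push_cast; linear_combination (n : A) * hx

variable (φ : A →+* B)

lemma RingHom.isUnit_of_isUnit_apply (hφ : Function.Surjective φ) (hker : RingHom.ker φ ^ 2 = ⊥)
    {x : A} (hx : IsUnit (φ x)) : IsUnit x := by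
  obtain ⟨y, hy⟩ := hφ ↑hx.unit⁻¹
  have hmem : x * y - 1 ∈ RingHom.ker φ := by simp [hy]
  have hnil : IsNilpotent (x * y - 1) :=
    ⟨2, by rw [pow_two]; exact Ideal.mul_eq_zero_of_sq_eq_bot hker hmem hmem⟩
  exact isUnit_of_mul_isUnit_left (by simpa using hnil.isUnit_add_one)

lemma Units.map_eq_one_iff_sub_one_mem_ker {u : Aˣ} :
    Units.map φ.toMonoidHom u = 1 ↔ (u : A) - 1 ∈ RingHom.ker φ := by
  simp [Units.ext_iff, sub_eq_zero]

lemma Units.pow_eq_one_of_map_eq_one (hker : RingHom.ker φ ^ 2 = ⊥) {n : ℕ}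
    (hn : ∀ x ∈ RingHom.ker φ, (n : A) * x = 0) {u : Aˣ} (hu : Units.map φ.toMonoidHom u = 1) :
    u ^ n = 1 := by
  rw [Units.map_eq_one_iff_sub_one_mem_ker] at hu
  ext
  rw [Units.val_pow_eq_pow_val, Units.val_one, ← add_sub_cancel (1 : A) u,
    one_add_pow_of_mul_self_eq_zero (Ideal.mul_eq_zero_of_sq_eq_bot hker hu hu), hn _ hu, add_zero]

def Ideal.unitsSubOneMemEquiv (I : Ideal A) (hI : I ^ 2 = ⊥) : {u : Aˣ // (u : A) - 1 ∈ I} ≃ I where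
  toFun u := ⟨u.1 - 1, u.2⟩
  invFun x :=
    have hx : x.1 * x.1 = 0 := Ideal.mul_eq_zero_of_sq_eq_bot hI x.2 x.2
    ⟨⟨1 + x, 1 - x, by linear_combination -hx, by linear_combination -hx⟩, by simp⟩
  left_inv u := by ext; simp
  right_inv x := by ext; simp

end SquareZero

lemma ZMod.ker_castHom_eq_span {m n : ℕ} (h : m ∣ n) :
    RingHom.ker (ZMod.castHom h (ZMod m)) = Ideal.span {(m : ZMod n)} := by
  ext x
  rw [RingHom.mem_ker, Ideal.mem_span_singleton]
  constructor
  · intro hx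
    rw [← ZMod.intCast_zmod_cast x, map_intCast, ZMod.intCast_zmod_eq_zero_iff_dvd] at hx
    obtain ⟨k, hk⟩ := hx
    exact ⟨k, by rw [← ZMod.intCast_zmod_cast x, hk]; push_cast; rfl⟩
  · rintro ⟨y, rfl⟩
    rw [map_mul, map_natCast, ZMod.natCast_self, zero_mul]

lemma ZMod.card_ker_castHom_mul {m n : ℕ} (h : m ∣ n) :
    Nat.card (RingHom.ker (ZMod.castHom h (ZMod m))) * m = n := by
  have key := (ZMod.castHom h (ZMod m)).toAddMonoidHom.ker.card_mul_index
  rwa [AddSubgroup.index_ker, AddMonoidHom.range_eq_top.mpr (ZMod.castHom_surjective h),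
    AddSubgroup.card_top, Nat.card_zmod, Nat.card_zmod] at key

namespace MonoidAlgebra

variable {R S G : Type*} [CommRing R] [CommRing S] [CommGroup G]

lemma aug_single (g : G) (r : R) : aug R G (single g r) = r := by
  simp [aug, lift_single]

lemma mem_augIdeal_iff {x : R[G]} : x ∈ augIdeal R G ↔ aug R G x = 0 := RingHom.mem_ker

lemma mem_Vgrp_iff {u : R[G]ˣ} : u ∈ Vgrp R G ↔ aug R G u = 1 := by
  simp [Vgrp, Units.ext_iff]

lemma mem_span_algebraMap_iff {c : R} {x : R[G]} :
    x ∈ Ideal.span {algebraMap R R[G] c} ↔ ∀ g, x.coeff g ∈ Ideal.span {c} := by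
  simp only [Ideal.mem_span_singleton]
  constructor
  · rintro ⟨y, rfl⟩ g
    rw [← Algebra.smul_def]
    exact ⟨y.coeff g, by simp⟩
  · intro h
    choose b hb using h
    refine ⟨x.coeff.sum fun g _ => single g (b g), ?_⟩
    rw [← Algebra.smul_def]
    conv_lhs => rw [← sum_coeff_single x]
    simp only [Finsupp.smul_sum, smul_single, smul_eq_mul, ← hb]
    rfl

variable (f : R →+* S)

lemma aug_mapRingHom (x : R[G]) : aug S G (mapRingHom G f x) = f (aug R G x) := by
  have : (aug S G).toRingHom.comp (mapRingHom G f) = f.comp (aug R G).toRingHom :=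
    ringHom_ext (by simp [aug_single]) (by simp [aug_single])
  exact RingHom.congr_fun this x

lemma mapRingHom_surjective (hf : Function.Surjective f) :
    Function.Surjective (mapRingHom G f) := by
  intro y
  obtain ⟨x, hx⟩ := Finsupp.mapRange_surjective f f.map_zero hf y.coeff
  exact ⟨ofCoeff x, by ext g; rw [coeff_mapRingHom, ← hx]; rfl⟩

lemma mem_ker_mapRingHom_iff {x : R[G]} :
    x ∈ RingHom.ker (mapRingHom G f) ↔ ∀ g, x.coeff g ∈ RingHom.ker f := by
  simp [RingHom.mem_ker, ← coeff_inj, Finsupp.ext_iff]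

lemma ker_mapRingHom_eq_span {c : R} (hc : RingHom.ker f = Ideal.span {c}) :
    RingHom.ker (mapRingHom G f) = Ideal.span {algebraMap R R[G] c} := by
  ext x
  rw [mem_ker_mapRingHom_iff, mem_span_algebraMap_iff, hc]

variable {c : R}

lemma ker_mapRingHom_sq_eq_bot (hc : RingHom.ker f = Ideal.span {c}) (hc2 : c ^ 2 = 0) :
    RingHom.ker (mapRingHom G f) ^ 2 = ⊥ := by
  rw [ker_mapRingHom_eq_span f hc, Ideal.span_singleton_pow, ← map_pow, hc2, map_zero,
    Ideal.span_singleton_eq_bot]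

lemma map_mem_Vgrp {u : R[G]ˣ} (hu : u ∈ Vgrp R G) :
    Units.map (mapRingHom G f).toMonoidHom u ∈ Vgrp S G := by
  rw [mem_Vgrp_iff] at hu ⊢
  simp [aug_mapRingHom, hu]

lemma exists_mem_Vgrp_map_eq (hf : Function.Surjective f) (hc : RingHom.ker f = Ideal.span {c})
    (hc2 : c ^ 2 = 0) {v : S[G]ˣ} (hv : v ∈ Vgrp S G) :
    ∃ u ∈ Vgrp R G, Units.map (mapRingHom G f).toMonoidHom u = v := by
  rw [mem_Vgrp_iff] at hv
  obtain ⟨w, hw⟩ := mapRingHom_surjective f hf (v : S[G])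
  set x := w - algebraMap R R[G] (aug R G w - 1)
  have hxv : mapRingHom G f x = v := by
    rw [map_sub, hw, ← RingHom.comp_apply, mapRingHom_comp_algebraMap, RingHom.comp_apply,
      map_sub, map_one, ← aug_mapRingHom, hw, hv, sub_self, map_zero, sub_zero]
  have hx : IsUnit x :=
    (mapRingHom G f).isUnit_of_isUnit_apply (mapRingHom_surjective f hf)
      (ker_mapRingHom_sq_eq_bot f hc hc2) (hxv ▸ v.isUnit)
  refine ⟨hx.unit, ?_, Units.ext hxv⟩
  rw [mem_Vgrp_iff, IsUnit.unit_spec]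
  simp [x, aug_single]

lemma map_eq_one_iff_exists_mem_augIdeal (hc : RingHom.ker f = Ideal.span {c}) {u : R[G]ˣ}
    (hu : u ∈ Vgrp R G) :
    Units.map (mapRingHom G f).toMonoidHom u = 1 ↔
      ∃ z ∈ augIdeal R G, (u : R[G]) = 1 + algebraMap R R[G] c * z := by
  rw [Units.map_eq_one_iff_sub_one_mem_ker, ker_mapRingHom_eq_span f hc, Ideal.mem_span_singleton]
  rw [mem_Vgrp_iff] at hu
  constructor
  · rintro ⟨z, hz⟩
    have hcz : c * aug R G z = 0 := by
      simpa [hu, aug_single, eq_comm] using congr_arg (aug R G) hz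
    refine ⟨z - algebraMap R R[G] (aug R G z), ?_, ?_⟩
    · simp [mem_augIdeal_iff, aug_single]
    · rw [mul_sub, ← map_mul, hcz, map_zero, sub_zero, ← hz, add_sub_cancel]
  · rintro ⟨z, -, hz⟩
    exact ⟨z, by rw [hz, add_sub_cancel_left]⟩

lemma pow_eq_one_of_map_eq_one (hc : RingHom.ker f = Ideal.span {c}) (hc2 : c ^ 2 = 0) {n : ℕ}
    (hn : (n : R) * c = 0) {u : R[G]ˣ} (hu : Units.map (mapRingHom G f).toMonoidHom u = 1) :
    u ^ n = 1 := by
  refine Units.pow_eq_one_of_map_eq_one (mapRingHom G f) (ker_mapRingHom_sq_eq_bot f hc hc2)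
    (fun x hx => ?_) hu
  rw [ker_mapRingHom_eq_span f hc, Ideal.mem_span_singleton] at hx
  obtain ⟨y, rfl⟩ := hx
  rw [← mul_assoc, ← map_natCast (algebraMap R R[G]), ← map_mul, hn, map_zero, zero_mul]

lemma card_ker_mapRingHom [Finite G] :
    Nat.card (RingHom.ker (mapRingHom G f)) = Nat.card (RingHom.ker f) ^ Nat.card G := by
  let e : RingHom.ker (mapRingHom G f) ≃ (G → RingHom.ker f) :=
    (Equiv.subtypeEquiv (coeffEquiv.trans Finsupp.equivFunOnFinite)
      fun _ => mem_ker_mapRingHom_iff f).trans Equiv.subtypePiEquivPi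
  rw [Nat.card_congr e, Nat.card_fun]

lemma card_augIdeal_inf_ker_mul_card_ker [Finite G] :
    Nat.card ↥(augIdeal R G ⊓ RingHom.ker (mapRingHom G f)) * Nat.card (RingHom.ker f) =
      Nat.card (RingHom.ker f) ^ Nat.card G := by
  let K := RingHom.ker (mapRingHom G f)
  let ψ : K.toAddSubgroup →+ R := (aug R G).toAddMonoidHom.comp K.toAddSubgroup.subtype
  have hker : ψ.ker ≃ ↥(augIdeal R G ⊓ K) :=
    { toFun x := ⟨x.1.1, x.2, x.1.2⟩
      invFun x := ⟨⟨x.1, x.2.2⟩, x.2.1⟩ }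
  have hrange : ψ.range = (RingHom.ker f).toAddSubgroup := by
    ext r
    constructor
    · rintro ⟨⟨x, hx : mapRingHom G f x = 0⟩, rfl⟩
      change f (aug R G x) = 0
      rw [← aug_mapRingHom, hx, map_zero]
    · intro hr
      refine ⟨⟨single 1 r, ?_⟩, aug_single 1 r⟩
      change mapRingHom G f (single 1 r) = 0
      rw [mapRingHom_single, show f r = 0 from hr, single_zero]
  calc Nat.card ↥(augIdeal R G ⊓ K) * Nat.card (RingHom.ker f)
      = Nat.card ψ.ker * Nat.card ψ.range := by rw [Nat.card_congr hker, hrange]; rfl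
    _ = Nat.card K := by rw [← AddSubgroup.index_ker, AddSubgroup.card_mul_index]; rfl
    _ = Nat.card (RingHom.ker f) ^ Nat.card G := card_ker_mapRingHom f

lemma card_mem_Vgrp_map_eq_one (hc : RingHom.ker f = Ideal.span {c}) (hc2 : c ^ 2 = 0) :
    Nat.card {u : R[G]ˣ // u ∈ Vgrp R G ∧ Units.map (mapRingHom G f).toMonoidHom u = 1} =
      Nat.card ↥(augIdeal R G ⊓ RingHom.ker (mapRingHom G f)) := by
  have hsq : (augIdeal R G ⊓ RingHom.ker (mapRingHom G f)) ^ 2 = ⊥ :=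
    le_bot_iff.mp <|
      ker_mapRingHom_sq_eq_bot (G := G) f hc hc2 ▸ Ideal.pow_right_mono inf_le_right 2
  refine Nat.card_congr ((Equiv.subtypeEquivRight fun u => ?_).trans
    ((augIdeal R G ⊓ _).unitsSubOneMemEquiv hsq))
  rw [mem_Vgrp_iff, Units.map_eq_one_iff_sub_one_mem_ker, Submodule.mem_inf, mem_augIdeal_iff,
    map_sub, map_one, sub_eq_zero]

end MonoidAlgebra

open MonoidAlgebra

theorem stmt_6_general (p e : ℕ) (hp : p.Prime) (he : 2 ≤ e)
    (G : Type*) [CommGroup G] [Fintype G] :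
    (∀ u ∈ Vgrp (ZMod (p ^ e)) G, Units.map (fbar p e G).toMonoidHom u ∈
        Vgrp (ZMod (p ^ (e - 1))) G) ∧
      (∀ v ∈ Vgrp (ZMod (p ^ (e - 1))) G, ∃ u ∈ Vgrp (ZMod (p ^ e)) G,
        Units.map (fbar p e G).toMonoidHom u = v) ∧
      (∀ u ∈ Vgrp (ZMod (p ^ e)) G,
        (Units.map (fbar p e G).toMonoidHom u = 1 ↔
          ∃ z ∈ augIdeal (ZMod (p ^ e)) G,
            (u : MonoidAlgebra (ZMod (p ^ e)) G) =
              1 + (p : MonoidAlgebra (ZMod (p ^ e)) G) ^ (e - 1) * z)) ∧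
      (∀ u ∈ Vgrp (ZMod (p ^ e)) G, Units.map (fbar p e G).toMonoidHom u = 1 → u ^ p = 1) ∧
      Nat.card {u : (MonoidAlgebra (ZMod (p ^ e)) G)ˣ //
          u ∈ Vgrp (ZMod (p ^ e)) G ∧ Units.map (fbar p e G).toMonoidHom u = 1} =
        p ^ (Fintype.card G - 1) := by
  have hdvd : p ^ (e - 1) ∣ p ^ e := pow_dvd_pow p (Nat.sub_le e 1)
  set f := ZMod.castHom hdvd (ZMod (p ^ (e - 1)))
  set c : ZMod (p ^ e) := (p : ZMod (p ^ e)) ^ (e - 1)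
  have hfbar : fbar p e G = mapRingHom G f := by ext <;> simp [fbar, f]
  have hpow : ∀ k, e ≤ k → (p : ZMod (p ^ e)) ^ k = 0 := fun k hk => by
    rw [← Nat.cast_pow, ZMod.natCast_eq_zero_iff]; exact pow_dvd_pow p hk
  have hc : RingHom.ker f = Ideal.span {c} := by rw [ZMod.ker_castHom_eq_span, Nat.cast_pow]
  have hc2 : c ^ 2 = 0 := by rw [← pow_mul]; exact hpow _ (by omega)
  have hpc : (p : ZMod (p ^ e)) * c = 0 := by rw [← pow_succ']; exact hpow _ (by omega)
  have hcard : Nat.card (RingHom.ker f) = p := by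
    have hpe : p ^ e = p * p ^ (e - 1) := by rw [← pow_succ']; congr 1; omega
    exact Nat.eq_of_mul_eq_mul_right (pow_pos hp.pos _)
      ((ZMod.card_ker_castHom_mul hdvd).trans hpe)
  have hpC : (p : MonoidAlgebra (ZMod (p ^ e)) G) ^ (e - 1) = algebraMap _ _ c := by
    simp only [c, map_pow, map_natCast]
  rw [hfbar, hpC]
  refine ⟨fun u hu => map_mem_Vgrp f hu,
    fun v hv => exists_mem_Vgrp_map_eq f (ZMod.castHom_surjective hdvd) hc hc2 hv,
    fun u hu => map_eq_one_iff_exists_mem_augIdeal f hc hu,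
    fun u _ hu => pow_eq_one_of_map_eq_one f hc hc2 hpc hu, ?_⟩
  have hG : 1 ≤ Fintype.card G := Fintype.card_pos
  have := card_augIdeal_inf_ker_mul_card_ker (G := G) f
  rw [hcard, Nat.card_eq_fintype_card (α := G), ← Nat.sub_add_cancel hG, pow_succ] at this
  rw [card_mem_Vgrp_map_eq_one f hc hc2, Nat.eq_of_mul_eq_mul_right hp.pos this]

/-- Reduction mod `p^{e-1}` induces a surjection `V(Z_{p^e}G) → V(Z_{p^{e-1}}G)`
whose kernel is `1 + p^{e-1} ω(Z_{p^e}G)`, an elementary abelian `p`-group of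
order `p^(|G|-1)`. -/
theorem stmt_6 (p e : ℕ) (hp : p.Prime) (he : 2 ≤ e)
    (G : Type*) [CommGroup G] [Fintype G] (hG : IsPGroup p G) :
    (∀ u ∈ Vgrp (ZMod (p ^ e)) G, Units.map (fbar p e G).toMonoidHom u ∈
        Vgrp (ZMod (p ^ (e - 1))) G) ∧
      (∀ v ∈ Vgrp (ZMod (p ^ (e - 1))) G, ∃ u ∈ Vgrp (ZMod (p ^ e)) G,
        Units.map (fbar p e G).toMonoidHom u = v) ∧
      (∀ u ∈ Vgrp (ZMod (p ^ e)) G,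
        (Units.map (fbar p e G).toMonoidHom u = 1 ↔
          ∃ z ∈ augIdeal (ZMod (p ^ e)) G,
            (u : MonoidAlgebra (ZMod (p ^ e)) G) =
              1 + (p : MonoidAlgebra (ZMod (p ^ e)) G) ^ (e - 1) * z)) ∧
      (∀ u ∈ Vgrp (ZMod (p ^ e)) G, Units.map (fbar p e G).toMonoidHom u = 1 → u ^ p = 1) ∧
      Nat.card {u : (MonoidAlgebra (ZMod (p ^ e)) G)ˣ //
          u ∈ Vgrp (ZMod (p ^ e)) G ∧ Units.map (fbar p e G).toMonoidHom u = 1} =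
        p ^ (Fintype.card G - 1) :=
  stmt_6_general p e hp he G
end

section
/- Let G be a finite abelian p-group with exponent p^n, and let e ≥ 1 and n' ≥ 2 satisfy p^i < n' ≤ p^{i+1}. Then the dimension subgroup D_{n'}(Z_{p^e}G) = G ∩ (1 + ω^{n'}(Z_{p^e}G)) equals G^{p^{e+i}}, while D_1(Z_{p^e}G) = G. -/
open Polynomial

theorem pow_dvd_choose_prime_pow_add {p e i k : ℕ} (hp : p.Prime) (hk0 : k ≠ 0)
    (hk : k < p ^ (i + 1)) : p ^ e ∣ (p ^ (e + i)).choose k := by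
  rcases lt_or_ge (p ^ (e + i)) k with hlt | hle
  · simp [Nat.choose_eq_zero_of_lt hlt]
  have hki : multiplicity p k ≤ i := by
    have := Nat.le_of_dvd (Nat.pos_of_ne_zero hk0) (pow_multiplicity_dvd p k)
    exact Nat.lt_succ_iff.mp ((Nat.pow_lt_pow_iff_right hp.one_lt).mp (this.trans_lt hk))
  rw [pow_dvd_iff_le_emultiplicity, hp.emultiplicity_choose_prime_pow hle hk0]
  exact_mod_cast (by omega : e ≤ e + i - multiplicity p k)

theorem not_pow_succ_dvd_choose_prime_pow_add {p e i : ℕ} (hp : p.Prime) :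
    ¬ p ^ (e + 1) ∣ (p ^ (e + i)).choose (p ^ i) := by
  rw [pow_dvd_iff_le_emultiplicity, hp.emultiplicity_choose_prime_pow
    (Nat.pow_le_pow_right hp.pos (by omega)) (pow_ne_zero _ hp.ne_zero),
    multiplicity_pow_self hp.ne_zero hp.prime.not_isUnit]
  norm_cast
  omega

theorem add_one_pow_sub_one_mem_pow {S : Type*} [CommRing S] {I : Ideal S} {x : S} (hx : x ∈ I)
    {m n : ℕ} (hmn : ∀ k, 0 < k → k < n → (m.choose k : S) = 0) : (x + 1) ^ m - 1 ∈ I ^ n := by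
  rw [add_pow, Finset.sum_range_succ']
  simp only [one_pow, mul_one, pow_zero, Nat.choose_zero_right, Nat.cast_one, add_sub_cancel_right]
  refine Ideal.sum_mem _ fun k _ => ?_
  rcases lt_or_ge (k + 1) n with hk | hk
  · simp [hmn (k + 1) k.succ_pos hk]
  · exact Ideal.mul_mem_right _ _ (Ideal.pow_le_pow_right hk (Ideal.pow_mem_pow hx _))

section Truncated
variable (R : Type*) [CommRing R] (N : ℕ)

noncomputable abbrev truncX : R[X] ⧸ Ideal.span {(X : R[X]) ^ N} := Ideal.Quotient.mk _ X

variable {R N}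

theorem truncX_pow_eq_zero : truncX R N ^ N = 0 := by
  rw [← map_pow, Ideal.Quotient.eq_zero_iff_mem]
  exact Ideal.subset_span rfl

theorem one_add_truncX_pow_eq_one_iff {m : ℕ} :
    (1 + truncX R N) ^ m = 1 ↔ ∀ k, 0 < k → k < N → (m.choose k : R) = 0 := by
  rw [← map_one (Ideal.Quotient.mk _), ← map_add, ← map_pow, ← sub_eq_zero, ← map_sub,
    Ideal.Quotient.eq_zero_iff_mem, Ideal.mem_span_singleton, X_pow_dvd_iff]
  refine forall_congr' fun k => ?_
  rcases Nat.eq_zero_or_pos k with rfl | hk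
  · simp [coeff_one_add_X_pow]
  · simp [coeff_one_add_X_pow, coeff_one, hk.ne', hk]

end Truncated

theorem isPrimitiveRoot_one_add_truncX {p e i : ℕ} (hp : p.Prime) (he : 1 ≤ e) :
    IsPrimitiveRoot (1 + truncX (ZMod (p ^ e)) (p ^ i + 1)) (p ^ (e + i)) := by
  have : Fact p.Prime := ⟨hp⟩
  obtain ⟨e, rfl⟩ : ∃ e', e = e' + 1 := ⟨e - 1, by omega⟩
  have hnot : ¬ (1 + truncX (ZMod (p ^ (e + 1))) (p ^ i + 1)) ^ p ^ (e + i) = 1 := by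
    rw [one_add_truncX_pow_eq_one_iff]
    intro h
    exact not_pow_succ_dvd_choose_prime_pow_add hp <|
      (ZMod.natCast_eq_zero_iff _ _).mp (h _ (pow_pos hp.pos i) (Nat.lt_succ_self _))
  have hfin : (1 + truncX (ZMod (p ^ (e + 1))) (p ^ i + 1)) ^ p ^ (e + i + 1) = 1 := by
    rw [one_add_truncX_pow_eq_one_iff]
    intro k hk hkN
    rw [ZMod.natCast_eq_zero_iff, show e + i + 1 = e + 1 + i by omega]
    exact pow_dvd_choose_prime_pow_add hp hk.ne' (hkN.trans_le (Nat.pow_lt_pow_succ hp.one_lt))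
  rw [show e + 1 + i = e + i + 1 by omega, ← orderOf_eq_prime_pow hnot hfin]
  exact IsPrimitiveRoot.orderOf _

theorem CommGroup.exists_monoidHom_apply_ne_one_of_isCyclic {A M : Type*} [CommGroup A]
    [Finite A] [CommGroup M] [IsCyclic M] [Finite M] (hA : Monoid.exponent A ∣ Nat.card M)
    {a : A} (ha : a ≠ 1) : ∃ φ : A →* M, φ a ≠ 1 := by
  set N := Monoid.exponent A
  have : NeZero N := ⟨Monoid.exponent_ne_zero_of_finite⟩
  obtain ⟨χ, hχ⟩ := CommGroup.exists_apply_ne_one_of_hasEnoughRootsOfUnity A ℂ ha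
  let χN : A →* rootsOfUnity N ℂ := χ.codRestrict _ fun x => by
    rw [mem_rootsOfUnity, ← map_pow, Monoid.pow_exponent_eq_one, map_one]
  have hχN : χN a ≠ 1 := fun h => hχ (congrArg Subtype.val h)
  obtain ⟨ζ, hζ⟩ := IsCyclic.exists_ofOrder_eq_natCard (α := M)
  have hζN : IsPrimitiveRoot (ζ ^ (Nat.card M / N)) (Nat.card (rootsOfUnity N ℂ)) := by
    rw [HasEnoughRootsOfUnity.natCard_rootsOfUnity]
    exact (hζ ▸ IsPrimitiveRoot.orderOf ζ).pow Nat.card_pos (Nat.div_mul_cancel hA).symm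
  obtain ⟨ψ, hψ⟩ := IsCyclic.exists_apply_ne_one ⟨_, hζN⟩ hχN
  exact ⟨ψ.comp χN, hψ⟩

section Augmentation
variable {R G : Type*} [CommRing R] [CommGroup G]

theorem of_sub_one_mem_augIdeal (g : G) : MonoidAlgebra.of R G g - 1 ∈ augIdeal R G := by
  simp [augIdeal, aug]

theorem sub_algebraMap_aug_mem_span (z : MonoidAlgebra R G) :
    z - algebraMap R _ (aug R G z) ∈
      Ideal.span (Set.range fun g => MonoidAlgebra.of R G g - 1) := by
  induction z using MonoidAlgebra.induction_linear with
  | zero => simp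
  | add x y hx hy =>
    rw [map_add, map_add, add_sub_add_comm]
    exact add_mem hx hy
  | single g r =>
    have hsingle : MonoidAlgebra.single g r - algebraMap R _ (aug R G (MonoidAlgebra.single g r)) =
        r • (MonoidAlgebra.of R G g - 1) := by
      simp [aug, MonoidAlgebra.lift_single, smul_sub, Algebra.algebraMap_eq_smul_one]
    rw [hsingle]
    exact Submodule.smul_of_tower_mem _ _ (Ideal.subset_span ⟨g, rfl⟩)

theorem augIdeal_eq_span :
    augIdeal R G = Ideal.span (Set.range fun g => MonoidAlgebra.of R G g - 1) := by
  refine le_antisymm (fun z hz => ?_) (Ideal.span_le.mpr ?_)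
  · have hz0 : aug R G z = 0 := hz
    simpa [hz0] using sub_algebraMap_aug_mem_span z
  · rintro _ ⟨g, rfl⟩
    exact of_sub_one_mem_augIdeal g

theorem map_mem_pow_of_mem_augIdeal_pow {A : Type*} [CommRing A] (f : MonoidAlgebra R G →+* A)
    {J : Ideal A} (hJ : ∀ g, f (MonoidAlgebra.of R G g) - 1 ∈ J) {n : ℕ} {z : MonoidAlgebra R G}
    (hz : z ∈ augIdeal R G ^ n) : f z ∈ J ^ n := by
  have hle : (augIdeal R G).map f ≤ J := by
    rw [augIdeal_eq_span, Ideal.map_span, Ideal.span_le]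
    rintro _ ⟨_, ⟨g, rfl⟩, rfl⟩
    simpa using hJ g
  exact Ideal.pow_right_mono hle n (Ideal.map_pow f _ n ▸ Ideal.mem_map_of_mem f hz)

theorem of_pow_sub_one_mem_augIdeal_pow {m n : ℕ}
    (hmn : ∀ k, 0 < k → k < n → (m.choose k : R) = 0) (h : G) :
    MonoidAlgebra.of R G (h ^ m) - 1 ∈ augIdeal R G ^ n := by
  rw [map_pow, ← sub_add_cancel (MonoidAlgebra.of R G h) 1]
  refine add_one_pow_sub_one_mem_pow (of_sub_one_mem_augIdeal h) fun k hk hkn => ?_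
  rw [← map_natCast (algebraMap R (MonoidAlgebra R G)), hmn k hk hkn, map_zero]

theorem exists_pow_eq_of_of_sub_one_mem_augIdeal_pow [Finite G] {A : Type*} [CommRing A]
    [Algebra R A] {u : A} {q n : ℕ} (hq : 0 < q)
    (hu : IsPrimitiveRoot u q) (hun : (u - 1) ^ n = 0) {g : G}
    (hg : MonoidAlgebra.of R G g - 1 ∈ augIdeal R G ^ n) : ∃ h, g = h ^ q := by
  let H := (powMonoidHom q : G →* G).range
  by_contra hng
  have hgH : (g : G ⧸ H) ≠ 1 := by
    rw [Ne, QuotientGroup.eq_one_iff]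
    rintro ⟨h, rfl⟩
    exact hng ⟨h, rfl⟩
  have hpow : ∀ x : G ⧸ H, x ^ q = 1 := fun x =>
    QuotientGroup.induction_on x fun x => (QuotientGroup.eq_one_iff _).mpr ⟨x, rfl⟩
  let ζ : Aˣ := (hu.isUnit hq.ne').unit
  have hζ : IsPrimitiveRoot ζ q := IsPrimitiveRoot.coe_units_iff.mp hu
  have hcard : Nat.card (Subgroup.zpowers ζ) = q := by rw [Nat.card_zpowers, hζ.eq_orderOf]
  have : Finite (Subgroup.zpowers ζ) := Nat.finite_of_card_ne_zero (hcard ▸ hq.ne')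
  obtain ⟨φ, hφ⟩ := CommGroup.exists_monoidHom_apply_ne_one_of_isCyclic
    (hcard ▸ Monoid.exponent_dvd_iff_forall_pow_eq_one.mpr hpow) hgH
  let Φ := MonoidAlgebra.lift R A G
    ((Units.coeHom A).comp ((Subgroup.zpowers ζ).subtype.comp (φ.comp (QuotientGroup.mk' H))))
  have hΦ : ∀ x, Φ (MonoidAlgebra.of R G x) = ((φ x : Aˣ) : A) := fun x => MonoidAlgebra.lift_of _ x
  have hJ : ∀ x, Φ.toRingHom (MonoidAlgebra.of R G x) - 1 ∈ Ideal.span {u - 1} := by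
    intro x
    obtain ⟨k, hk⟩ := (hζ.isOfFinOrder hq.ne').mem_powers_iff_mem_zpowers.mpr (φ x).2
    rw [Ideal.mem_span_singleton, AlgHom.toRingHom_eq_coe, RingHom.coe_coe, hΦ, ← hk,
      Units.val_pow_eq_pow_val, IsUnit.unit_spec]
    simpa using sub_dvd_pow_sub_pow u 1 k
  have := map_mem_pow_of_mem_augIdeal_pow Φ.toRingHom hJ hg
  rw [Ideal.span_singleton_pow, hun, Ideal.mem_span_singleton, zero_dvd_iff, map_sub, map_one,
    sub_eq_zero, AlgHom.toRingHom_eq_coe, RingHom.coe_coe, hΦ] at this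
  exact hφ (Subtype.ext (Units.ext this))

end Augmentation

theorem stmt_9_general (p e n' i : ℕ) (hp : p.Prime) (he : 1 ≤ e)
    (G : Type*) [CommGroup G] [Fintype G]
    (h1 : p ^ i < n') (h2 : n' ≤ p ^ (i + 1)) :
    (∀ g : G,
        (MonoidAlgebra.of (ZMod (p ^ e)) G g - 1 ∈ (augIdeal (ZMod (p ^ e)) G) ^ n' ↔
          ∃ h : G, g = h ^ p ^ (e + i))) ∧
      (∀ g : G, MonoidAlgebra.of (ZMod (p ^ e)) G g - 1 ∈
        (augIdeal (ZMod (p ^ e)) G) ^ 1) := by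
  refine ⟨fun g => ⟨fun hg => ?_, ?_⟩, fun g => by simpa using of_sub_one_mem_augIdeal g⟩
  · have hξ : (1 + truncX (ZMod (p ^ e)) (p ^ i + 1) - 1) ^ n' = 0 := by
      rw [add_sub_cancel_left]
      exact pow_eq_zero_of_le h1 truncX_pow_eq_zero
    exact exists_pow_eq_of_of_sub_one_mem_augIdeal_pow (pow_pos hp.pos _)
      (isPrimitiveRoot_one_add_truncX hp he) hξ hg
  · rintro ⟨h, rfl⟩
    exact of_pow_sub_one_mem_augIdeal_pow (fun k hk hkn => (ZMod.natCast_eq_zero_iff _ _).mpr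
      (pow_dvd_choose_prime_pow_add hp hk.ne' (hkn.trans_le h2))) h

/-- Dimension subgroups of `Z_{p^e}G`: `D_1 = G`, and for `p^i < n' ≤ p^{i+1}`,
`D_{n'}(Z_{p^e}G) = G^{p^{e+i}}`. -/
theorem stmt_9 (p e n n' i : ℕ) (hp : p.Prime) (he : 1 ≤ e)
    (G : Type*) [CommGroup G] [Fintype G] (hG : IsPGroup p G)
    (hexp : Monoid.exponent G = p ^ n) (hn' : 2 ≤ n')
    (h1 : p ^ i < n') (h2 : n' ≤ p ^ (i + 1)) :
    (∀ g : G,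
        (MonoidAlgebra.of (ZMod (p ^ e)) G g - 1 ∈ (augIdeal (ZMod (p ^ e)) G) ^ n' ↔
          ∃ h : G, g = h ^ p ^ (e + i))) ∧
      (∀ g : G, MonoidAlgebra.of (ZMod (p ^ e)) G g - 1 ∈
        (augIdeal (ZMod (p ^ e)) G) ^ 1) :=
  stmt_9_general p e n' i hp he G h1 h2
end

section
/- Let p be an odd prime, G a finite abelian p-group, e ≥ 1, d ≥ 1, and y ∈ Z_{p^e}G with p^{e−1}y ≠ 0. Then the unit 1 + p^d y of Z_{p^e}G has multiplicative order exactly p^{e−d}. -/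
open Finset in
/-- Key binomial step: for an odd prime `p` and `d ≥ 1`, raising
`1 + p^d y + p^(d+1) w` to the `p`-th power yields `1 + p^(d+1) y + p^(d+2) w'`. -/
lemma key13 {R : Type*} [CommRing R] {p : ℕ} (hp : p.Prime) (hp3 : 3 ≤ p) {d : ℕ} (hd : 1 ≤ d)
    (y w : R) :
    ∃ w', (1 + (p:R)^d * y + (p:R)^(d+1) * w)^p
      = 1 + (p:R)^(d+1) * y + (p:R)^(d+2) * w' := by
  set s : R := (p:R)^d * (y + p * w) with hs
  have h1 : 1 + (p:R)^d * y + (p:R)^(d+1) * w = s + 1 := by rw [hs]; ring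
  rw [h1, add_pow]
  have hdvd : ∀ k ∈ Ico 2 (p+1), ((p:R)^(d+2)) ∣ s ^ k * 1 ^ (p - k) * (p.choose k : R) := by
    intro k hk
    simp only [mem_Ico] at hk
    rcases eq_or_lt_of_le (Nat.lt_succ_iff.mp hk.2) with hkp | hkp
    · have h2 : (p:R)^(d+2) ∣ s ^ k := by
        rw [hs, mul_pow, ← pow_mul]
        refine Dvd.dvd.mul_right (pow_dvd_pow _ ?_) _
        subst hkp
        nlinarith
      exact (h2.mul_right _).mul_right _
    · obtain ⟨c, hc⟩ := hp.dvd_choose_self (by omega) hkp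
      have h2 : (p:R)^(d+1) ∣ s ^ k := by
        rw [hs, mul_pow, ← pow_mul]
        refine Dvd.dvd.mul_right (pow_dvd_pow _ ?_) _
        nlinarith [hk.1]
      obtain ⟨t, ht⟩ := h2
      refine ⟨t * c, ?_⟩
      rw [ht, hc]
      push_cast
      ring
  obtain ⟨t, ht⟩ := (Finset.dvd_sum hdvd)
  have hsplit : ∑ k ∈ range (p+1), s ^ k * 1 ^ (p - k) * (p.choose k : R)
      = (∑ k ∈ Ico 0 2, s ^ k * 1 ^ (p - k) * (p.choose k : R))
        + ∑ k ∈ Ico 2 (p+1), s ^ k * 1 ^ (p - k) * (p.choose k : R) := by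
    rw [Finset.sum_Ico_consecutive _ (by omega) (by omega), Finset.range_eq_Ico]
  rw [hsplit, ht]
  refine ⟨w + t, ?_⟩
  have h02 : (∑ k ∈ Ico 0 2, s ^ k * 1 ^ (p - k) * (p.choose k : R))
      = 1 + s * p := by
    have : Ico 0 2 = ({0, 1} : Finset ℕ) := by decide
    rw [this]
    simp [Nat.choose_one_right]
  rw [h02, hs]
  ring

/-- Iterating the key step: `(1 + p^d y)^(p^k) = 1 + p^(d+k) y + p^(d+k+1) w'`. -/
lemma iter13 {R : Type*} [CommRing R] {p : ℕ} (hp : p.Prime) (hp3 : 3 ≤ p) {d : ℕ} (hd : 1 ≤ d)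
    (y : R) (k : ℕ) :
    ∃ w', (1 + (p:R)^d * y)^(p^k) = 1 + (p:R)^(d+k) * y + (p:R)^(d+k+1) * w' := by
  induction k with
  | zero => exact ⟨0, by simp⟩
  | succ k ih =>
    obtain ⟨w, hw⟩ := ih
    obtain ⟨w', hw'⟩ := key13 (R := R) hp hp3 (d := d + k) (by omega) y w
    refine ⟨w', ?_⟩
    rw [pow_succ, pow_mul, hw, hw']
    ring_nf

/-- For an odd prime `p`, a finite abelian `p`-group `G`, `d ≥ 1` and
`y ∈ Z_{p^e}G` with `p^{e-1} y ≠ 0`, the unit `1 + p^d y` has order exactly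
`p^{e-d}`. -/
theorem stmt_13 (p e d : ℕ) (hp : p.Prime) (hodd : Odd p) (he : 1 ≤ e) (hd : 1 ≤ d)
    (G : Type*) [CommGroup G] [Fintype G] (hG : IsPGroup p G)
    (y : MonoidAlgebra (ZMod (p ^ e)) G)
    (hy : (p : MonoidAlgebra (ZMod (p ^ e)) G) ^ (e - 1) * y ≠ 0) :
    ∃ u : (MonoidAlgebra (ZMod (p ^ e)) G)ˣ,
      (u : MonoidAlgebra (ZMod (p ^ e)) G) =
        1 + (p : MonoidAlgebra (ZMod (p ^ e)) G) ^ d * y ∧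
      orderOf u = p ^ (e - d) := by
  have hp3 : 3 ≤ p := by
    obtain ⟨k, hk⟩ := hodd
    have := hp.two_le
    omega
  have hpe : (p : MonoidAlgebra (ZMod (p ^ e)) G) ^ e = 0 := by
    have h1 : ((p ^ e : ℕ) : MonoidAlgebra (ZMod (p ^ e)) G)
        = algebraMap (ZMod (p ^ e)) _ ((p ^ e : ℕ) : ZMod (p ^ e)) := (map_natCast _ _).symm
    rw [ZMod.natCast_self, map_zero] at h1
    rw [← h1]
    push_cast
    ring
  have hdvd0 : ∀ n, e ≤ n → (p : MonoidAlgebra (ZMod (p ^ e)) G) ^ n = 0 := by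
    intro n hn
    rw [← Nat.add_sub_cancel' hn, pow_add, hpe, zero_mul]
  have hnil : IsNilpotent ((p : MonoidAlgebra (ZMod (p ^ e)) G) ^ d * y) := by
    refine ⟨e, ?_⟩
    rw [mul_pow, ← pow_mul, hdvd0 (d * e) (Nat.le_mul_of_pos_left e hd), zero_mul]
  have hu : IsUnit (1 + (p : MonoidAlgebra (ZMod (p ^ e)) G) ^ d * y) :=
    IsNilpotent.isUnit_one_add hnil
  refine ⟨hu.unit, hu.unit_spec, ?_⟩
  rcases le_or_gt e d with hle | hlt
  · have h0 : (p : MonoidAlgebra (ZMod (p ^ e)) G) ^ d = 0 := hdvd0 d hle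
    have h1 : hu.unit = 1 := by
      rw [← Units.val_eq_one, hu.unit_spec, h0, zero_mul, add_zero]
    rw [h1, orderOf_one, Nat.sub_eq_zero_of_le hle, pow_zero]
  · have hFact : Fact p.Prime := ⟨hp⟩
    have hm : e - d - 1 + 1 = e - d := by omega
    have key : orderOf hu.unit = p ^ (e - d - 1 + 1) := by
      apply orderOf_eq_prime_pow
      · intro hcon
        obtain ⟨w, hw⟩ := iter13 hp hp3 hd y (e - d - 1)
        have hval : ((hu.unit ^ p ^ (e - d - 1) : _ˣ) : MonoidAlgebra (ZMod (p ^ e)) G) = 1 := by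
          rw [hcon, Units.val_one]
        rw [Units.val_pow_eq_pow_val, hu.unit_spec, hw] at hval
        have h2 : d + (e - d - 1) + 1 = e := by omega
        have h1 : d + (e - d - 1) = e - 1 := by omega
        rw [h2, hpe, zero_mul, add_zero, h1] at hval
        exact hy (add_eq_left.mp hval)
      · obtain ⟨w, hw⟩ := iter13 hp hp3 hd y (e - d)
        have h1 : d + (e - d) = e := by omega
        rw [hm, ← Units.val_eq_one, Units.val_pow_eq_pow_val, hu.unit_spec, hw, h1, hpe, zero_mul,
          add_zero, hdvd0 (e + 1) (by omega), zero_mul, add_zero]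
    rw [key, hm]
end
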